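/- For every fuse-k-expression φ there exists a fuse-k-expression φ' whose value is the same k-labeled graph (up to label-preserving isomorphism), which contains no useless operator occurrences, and such that for every fuse subterm θ_i(ψ) of φ': the argument has the form ψ = θ_{j_1}(⋯ θ_{j_r}(ψ_1 ⊕ ψ_2) ⋯) for some r ≥ 0, the evaluated graph G^ψ contains exactly two vertices of label i, and of these two vertices one belongs to G^{ψ_1} and the other to G^{ψ_2}. -/

import Mathlib

/-! ### `k`-labeled graphs and the basic operations on them -/

/-- A `k`-labeled graph: a simple graph together with a labeling of its vertices
by labels from `Fin k`. -/
structure LGraph (k : ℕ) where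
  V : Type
  G : SimpleGraph V
  lab : V → Fin k

namespace LGraph

variable {k : ℕ}

/-- The join operation `η_{a,b}`: add all edges between vertices of label `a`
and vertices of label `b`. -/
def join (a b : Fin k) (H : LGraph k) : LGraph k where
  V := H.V
  G :=
    { Adj := fun u v =>
        H.G.Adj u v ∨ (u ≠ v ∧ ((H.lab u = a ∧ H.lab v = b) ∨ (H.lab u = b ∧ H.lab v = a)))
      symm := by
        constructor
        intro u v h
        rcases h with h | ⟨hne, h⟩
        · exact Or.inl (H.G.adj_symm h)
        · refine Or.inr ⟨hne.symm, ?_⟩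
          rcases h with ⟨h1, h2⟩ | ⟨h1, h2⟩
          · exact Or.inr ⟨h2, h1⟩
          · exact Or.inl ⟨h2, h1⟩
      loopless := by
        constructor
        intro v h
        rcases h with h | ⟨hne, _⟩
        · exact H.G.loopless.irrefl v h
        · exact hne rfl }
  lab := H.lab

/-- The relabel operation `ρ_{a→b}`: every vertex of label `a` gets label `b` instead. -/
def relabel (a b : Fin k) (H : LGraph k) : LGraph k where
  V := H.V
  G := H.G
  lab := fun v => if H.lab v = a then b else H.lab v

/-- The fuse operation `θ_i`: replace all vertices of label `i` by a single new vertex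
(represented by `none`) of label `i` whose neighbourhood is the union of their
neighbourhoods. -/
def fuse (i : Fin k) (H : LGraph k) : LGraph k where
  V := Option {v : H.V // H.lab v ≠ i}
  G :=
    { Adj := fun x y =>
        match x, y with
        | some u, some v => H.G.Adj u.1 v.1
        | some u, none => ∃ w, H.lab w = i ∧ H.G.Adj u.1 w
        | none, some v => ∃ w, H.lab w = i ∧ H.G.Adj w v.1
        | none, none => False
      symm := by
        constructor
        rintro (_ | u) (_ | v) h
        · exact h
        · obtain ⟨w, hw, ha⟩ := h
          exact ⟨w, hw, ha.symm⟩
        · obtain ⟨w, hw, ha⟩ := h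
          exact ⟨w, hw, ha.symm⟩
        · exact H.G.adj_symm h
      loopless := by
        constructor
        rintro (_ | v) h
        · exact h
        · exact H.G.loopless.irrefl v.1 h }
  lab := fun x =>
    match x with
    | some u => H.lab u.1
    | none => i

/-- Disjoint union `H1 ⊕ H2` of two `k`-labeled graphs. -/
def union (H1 H2 : LGraph k) : LGraph k where
  V := H1.V ⊕ H2.V
  G := H1.G ⊕g H2.G
  lab := Sum.elim H1.lab H2.lab

/-- Label-preserving isomorphism of `k`-labeled graphs. -/
def LIso (H1 H2 : LGraph k) : Prop :=
  ∃ e : H1.G ≃g H2.G, ∀ v, H2.lab (e v) = H1.lab v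

/-- The occurrence of the join operator `η_{a,b}` applied to `H` is not useless,
i.e. it creates at least one new edge. -/
def joinUseful (a b : Fin k) (H : LGraph k) : Prop :=
  ∃ u v : H.V, u ≠ v ∧ H.lab u = a ∧ H.lab v = b ∧ ¬ H.G.Adj u v

/-- The occurrence of the fuse operator `θ_i` applied to `H` is not useless,
i.e. `H` has at least two vertices of label `i`. -/
def fuseUseful (i : Fin k) (H : LGraph k) : Prop :=
  ∃ u v : H.V, u ≠ v ∧ H.lab u = i ∧ H.lab v = i

/-- The occurrence of a relabel operator `ρ_{a→b}` applied to `H` is not useless,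
i.e. `H` has a vertex of label `a`. -/
def relabelUseful (a : Fin k) (H : LGraph k) : Prop :=
  ∃ v : H.V, H.lab v = a

/-- `relabelSeq i [a₁, …, a_q] H = ρ_{a₁→i}(⋯(ρ_{a_q→i}(H))⋯)`. -/
def relabelSeq (i : Fin k) : List (Fin k) → LGraph k → LGraph k
  | [], H => H
  | a :: as, H => relabel a i (relabelSeq i as H)

/-- None of the relabel operators in `relabelSeq i as H` is useless (this includes
that none of them has the form `ρ_{a→a}`). -/
def relabelSeqUseful (i : Fin k) : List (Fin k) → LGraph k → Prop
  | [], _ => True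
  | a :: as, H => relabelSeqUseful i as H ∧ a ≠ i ∧ relabelUseful a (relabelSeq i as H)

end LGraph

/-! ### Fuse-`k`-expressions -/

/-- A fuse-`k`-expression: introduce a vertex, disjoint union, join, relabel, fuse. -/
inductive FuseExpr (k : ℕ) where
  | intro (i : Fin k)
  | union (φ1 φ2 : FuseExpr k)
  | join (i j : Fin k) (φ : FuseExpr k)
  | relabel (i j : Fin k) (φ : FuseExpr k)
  | fuse (i : Fin k) (φ : FuseExpr k)

namespace FuseExpr

variable {k : ℕ}

/-- The single-vertex `k`-labeled graph with label `i`. -/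
def singleVertex (i : Fin k) : LGraph k := ⟨PUnit, ⊥, fun _ => i⟩

/-- The `k`-labeled graph `G^φ` obtained by evaluating a fuse-`k`-expression. -/
def eval : FuseExpr k → LGraph k
  | .intro i => singleVertex i
  | .union φ1 φ2 => LGraph.union φ1.eval φ2.eval
  | .join i j φ => LGraph.join i j φ.eval
  | .relabel i j φ => LGraph.relabel i j φ.eval
  | .fuse i φ => LGraph.fuse i φ.eval

/-- Well-formedness of a fuse-`k`-expression: joins and relabels use two distinct labels,
and every fuse `θ_i` is applied to a graph having a vertex of label `i`. -/
def WF : FuseExpr k → Prop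
  | .intro _ => True
  | .union φ1 φ2 => φ1.WF ∧ φ2.WF
  | .join i j φ => i ≠ j ∧ φ.WF
  | .relabel i j φ => i ≠ j ∧ φ.WF
  | .fuse i φ => φ.WF ∧ ∃ v, φ.eval.lab v = i

end FuseExpr

/-- A graph `G` admits a fuse-`k`-expression if some well-formed fuse-`k`-expression
evaluates to a labeled graph whose underlying simple graph is isomorphic to `G`. -/
def FuseAdmits {V : Type} (k : ℕ) (G : SimpleGraph V) : Prop :=
  ∃ φ : FuseExpr k, φ.WF ∧ Nonempty (φ.eval.G ≃g G)

namespace FuseExpr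

variable {k : ℕ}

/-- No operator occurrence in the fuse-`k`-expression is useless: every join creates a
new edge, every fuse fuses at least two vertices, every relabel `ρ_{i→j}` has `i ≠ j`
and is applied to a graph with a vertex of label `i`. -/
def NoUseless : FuseExpr k → Prop
  | .intro _ => True
  | .union φ1 φ2 => φ1.NoUseless ∧ φ2.NoUseless
  | .join i j φ => i ≠ j ∧ LGraph.joinUseful i j φ.eval ∧ φ.NoUseless
  | .relabel i j φ => i ≠ j ∧ LGraph.relabelUseful i φ.eval ∧ φ.NoUseless
  | .fuse i φ => LGraph.fuseUseful i φ.eval ∧ φ.NoUseless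

/-- The expression is a chain of fuse operators `θ_{j₁}(θ_{j₂}(⋯θ_{j_r}(ψ₁ ⊕ ψ₂)⋯))`
(with `r ≥ 0`) ending in a union node. -/
def IsFuseChainToUnion : FuseExpr k → Prop
  | .union _ _ => True
  | .fuse _ ψ => ψ.IsFuseChainToUnion
  | _ => False

/-- Every fuse subterm `θ_i(ψ)` has its argument `ψ` of the form
`θ_{j₁}(⋯θ_{j_r}(ψ₁ ⊕ ψ₂)⋯)`, i.e. every inner node on the path from a fuse node to
the topmost union node below it is itself a fuse node. -/
def FusesAboveUnions : FuseExpr k → Prop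
  | .intro _ => True
  | .union φ1 φ2 => φ1.FusesAboveUnions ∧ φ2.FusesAboveUnions
  | .join _ _ φ => φ.FusesAboveUnions
  | .relabel _ _ φ => φ.FusesAboveUnions
  | .fuse _ φ => φ.IsFuseChainToUnion ∧ φ.FusesAboveUnions

end FuseExpr

/-- The `k`-labeled graph `H` has exactly one vertex of label `i`. -/
def ExactlyOne {k : ℕ} (H : LGraph k) (i : Fin k) : Prop :=
  ∃! v : H.V, H.lab v = i

/-- The `k`-labeled graph `H` has exactly two vertices of label `i`. -/
def ExactlyTwo {k : ℕ} (H : LGraph k) (i : Fin k) : Prop :=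
  ∃ u v : H.V, u ≠ v ∧ H.lab u = i ∧ H.lab v = i ∧
    ∀ w : H.V, H.lab w = i → w = u ∨ w = v

namespace FuseExpr

variable {k : ℕ}

/-- The expression is a chain of fuses ending in a union `ψ₁ ⊕ ψ₂` such that each of
`G^{ψ₁}` and `G^{ψ₂}` contains exactly one vertex of label `i` (so the two vertices of
label `i` above the union come one from each side). -/
def ChainWithOneFromEachSide (i : Fin k) : FuseExpr k → Prop
  | .union ψ1 ψ2 => ExactlyOne ψ1.eval i ∧ ExactlyOne ψ2.eval i
  | .fuse _ ψ => ChainWithOneFromEachSide i ψ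
  | _ => False

/-- Every fuse subterm `θ_i(ψ)` of the expression satisfies: `ψ` is a chain of fuses
over a union, `G^ψ` contains exactly two vertices of label `i`, and of these two
vertices one comes from each side of the union. -/
def FusesExactlyTwoFromDifferentSides : FuseExpr k → Prop
  | .intro _ => True
  | .union φ1 φ2 => φ1.FusesExactlyTwoFromDifferentSides ∧ φ2.FusesExactlyTwoFromDifferentSides
  | .join _ _ φ => φ.FusesExactlyTwoFromDifferentSides
  | .relabel _ _ φ => φ.FusesExactlyTwoFromDifferentSides
  | .fuse i φ => ExactlyTwo φ.eval i ∧ φ.ChainWithOneFromEachSide i ∧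
      φ.FusesExactlyTwoFromDifferentSides

end FuseExpr


/-!
The fuse `θ_i` is the case `S = {i}` of a more general operation: merging all vertices whose
label lies in a set `S` into a single vertex of label `i`. By induction on an expression `ψ` that
is already clean, every such merge of `G^ψ` is realized by a clean expression. The merge commutes
with joins, relabels and fuses, after adjusting `S` or absorbing the operation when its labels lie
in `S`; at a union it is pushed into both sides, and when both sides meet `S`, one fuse of the two
merged vertices, one from each side, is placed directly above the union. Graphs built this way
are compared through quotient maps, since two quotients of a labeled graph with the same kernel
and the same labels are isomorphic. Replacing the fuses bottom-up by such realizations, and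
dropping useless joins and relabels, yields the theorem.
-/

theorem Function.FactorsThrough.exists_comp_eq {α β γ : Type*} {f : α → β} {g : α → γ}
    (hg : g.FactorsThrough f) (hf : Function.Surjective f) : ∃ h : β → γ, h ∘ f = g :=
  ⟨g ∘ Function.surjInv hf, funext fun a => hg (Function.surjInv_eq hf (f a))⟩

namespace LGraph

variable {k : ℕ}

theorem LIso.refl (H : LGraph k) : LIso H H := ⟨RelIso.refl _, fun _ => rfl⟩

theorem LIso.symm {H₁ H₂ : LGraph k} (h : LIso H₁ H₂) : LIso H₂ H₁ := by
  obtain ⟨e, he⟩ := h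
  exact ⟨e.symm, fun v => by rw [← he (e.symm v), e.apply_symm_apply]⟩

theorem LIso.trans {H₁ H₂ H₃ : LGraph k} (h : LIso H₁ H₂) (h' : LIso H₂ H₃) : LIso H₁ H₃ := by
  obtain ⟨e, he⟩ := h
  obtain ⟨e', he'⟩ := h'
  exact ⟨e.trans e', fun v => (he' (e v)).trans (he v)⟩

theorem LIso.mk' {H₁ H₂ : LGraph k} (e : H₁.V ≃ H₂.V)
    (hadj : ∀ u v, H₂.G.Adj (e u) (e v) ↔ H₁.G.Adj u v)
    (hlab : ∀ v, H₂.lab (e v) = H₁.lab v) : LIso H₁ H₂ :=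
  ⟨⟨e, fun {u v} => hadj u v⟩, hlab⟩

theorem LIso.exists_lab_eq {H₁ H₂ : LGraph k} {a : Fin k} (h : LIso H₁ H₂)
    (ha : ∃ v, H₁.lab v = a) : ∃ v, H₂.lab v = a := by
  obtain ⟨e, he⟩ := h
  obtain ⟨v, rfl⟩ := ha
  exact ⟨e v, he v⟩

section

variable {a b : Fin k} {H H₁ H₂ H₁' H₂' : LGraph k}

theorem join_congr (h : LIso H₁ H₂) : LIso (H₁.join a b) (H₂.join a b) := by
  obtain ⟨e, he⟩ := h
  have hlab : ∀ w c, H₂.lab (e w) = c ↔ H₁.lab w = c := fun w c => by rw [he w]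
  refine LIso.mk' e.toEquiv (fun u v => ?_) he
  exact or_congr e.map_rel_iff (and_congr (not_congr e.toEquiv.apply_eq_iff_eq)
    (or_congr (and_congr (hlab u a) (hlab v b)) (and_congr (hlab u b) (hlab v a))))

theorem relabel_congr (h : LIso H₁ H₂) : LIso (H₁.relabel a b) (H₂.relabel a b) := by
  obtain ⟨e, he⟩ := h
  refine LIso.mk' e.toEquiv (fun u v => e.map_rel_iff) (fun v => ?_)
  show (if H₂.lab (e v) = a then b else H₂.lab (e v)) = (if H₁.lab v = a then b else H₁.lab v)
  rw [he v]

theorem union_congr (h₁ : LIso H₁ H₁') (h₂ : LIso H₂ H₂') :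
    LIso (H₁.union H₂) (H₁'.union H₂') := by
  obtain ⟨e₁, he₁⟩ := h₁
  obtain ⟨e₂, he₂⟩ := h₂
  refine LIso.mk' (Equiv.sumCongr e₁.toEquiv e₂.toEquiv) (fun u v => ?_) (fun v => ?_)
  · rcases u with u | u <;> rcases v with v | v
    · exact e₁.map_rel_iff
    · exact Iff.rfl
    · exact Iff.rfl
    · exact e₂.map_rel_iff
  · rcases v with v | v
    · exact he₁ v
    · exact he₂ v

theorem join_liso_self (h : ¬ joinUseful a b H) : LIso (H.join a b) H := by
  simp only [joinUseful, not_exists, not_and] at h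
  refine LIso.mk' (Equiv.refl _) (fun u v => ⟨fun huv => Or.inl huv, ?_⟩) (fun v => rfl)
  rintro (huv | ⟨hne, ⟨hu, hv⟩ | ⟨hu, hv⟩⟩)
  · exact huv
  · exact not_not.1 (h u v hne hu hv)
  · exact H.G.adj_symm (not_not.1 (h v u hne.symm hv hu))

theorem relabel_liso_self (h : a = b ∨ ¬ relabelUseful a H) : LIso (H.relabel a b) H := by
  refine LIso.mk' (Equiv.refl _) (fun u v => Iff.rfl) (fun v => ?_)
  show H.lab v = if H.lab v = a then b else H.lab v
  split_ifs with hv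
  · rcases h with rfl | h
    · exact hv
    · exact absurd ⟨v, hv⟩ h
  · rfl

theorem exactlyTwo_union {i : Fin k} (h₁ : ExactlyOne H₁ i)
    (h₂ : ExactlyOne H₂ i) : ExactlyTwo (H₁.union H₂) i := by
  obtain ⟨u, hu, hu'⟩ := h₁
  obtain ⟨v, hv, hv'⟩ := h₂
  refine ⟨.inl u, .inr v, Sum.inl_ne_inr, hu, hv, ?_⟩
  rintro (w | w) hw
  exacts [Or.inl (congrArg Sum.inl (hu' w hw)), Or.inr (congrArg Sum.inr (hv' w hw))]

end

structure IsQuotientMap {H H' : LGraph k} (π : H.V → H'.V) : Prop where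
  surjective : Function.Surjective π
  adj_iff : ∀ x y, H'.G.Adj x y ↔ x ≠ y ∧ ∃ u v, π u = x ∧ π v = y ∧ H.G.Adj u v

namespace IsQuotientMap

variable {H H' H'' : LGraph k}

theorem of_iso (e : H.G ≃g H'.G) : IsQuotientMap (H := H) (H' := H') e where
  surjective := e.surjective
  adj_iff x y := by
    refine ⟨fun h => ⟨h.ne, e.symm x, e.symm y, by simp, by simp, e.symm.map_rel_iff.2 h⟩, ?_⟩
    rintro ⟨-, u, v, rfl, rfl, h⟩
    exact e.map_rel_iff.2 h

theorem comp {ι : H.V → H'.V} {π : H'.V → H''.V} (hπ : IsQuotientMap π)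
    (hι : IsQuotientMap ι) : IsQuotientMap (π ∘ ι) where
  surjective := hπ.surjective.comp hι.surjective
  adj_iff x y := by
    rw [hπ.adj_iff]
    constructor
    · rintro ⟨hxy, p, q, rfl, rfl, hpq⟩
      obtain ⟨-, u, v, rfl, rfl, huv⟩ := (hι.adj_iff p q).1 hpq
      exact ⟨hxy, u, v, rfl, rfl, huv⟩
    · rintro ⟨hxy, u, v, rfl, rfl, huv⟩
      exact ⟨hxy, ι u, ι v, rfl, rfl,
        (hι.adj_iff _ _).2 ⟨fun h => hxy (congrArg π h), u, v, rfl, rfl, huv⟩⟩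

theorem of_comp {ι : H.V → H'.V} {π : H'.V → H''.V} (hπι : IsQuotientMap (π ∘ ι))
    (hι : IsQuotientMap ι) : IsQuotientMap π where
  surjective := hπι.surjective.of_comp
  adj_iff x y := by
    rw [hπι.adj_iff]
    constructor
    · rintro ⟨hxy, u, v, rfl, rfl, huv⟩
      exact ⟨hxy, ι u, ι v, rfl, rfl,
        (hι.adj_iff _ _).2 ⟨fun h => hxy (congrArg π h), u, v, rfl, rfl, huv⟩⟩
    · rintro ⟨hxy, p, q, rfl, rfl, hpq⟩
      obtain ⟨-, u, v, rfl, rfl, huv⟩ := (hι.adj_iff p q).1 hpq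
      exact ⟨hxy, u, v, rfl, rfl, huv⟩

theorem sumMap {H₁ H₂ H₁' H₂' : LGraph k} {π₁ : H₁.V → H₁'.V} {π₂ : H₂.V → H₂'.V}
    (h₁ : IsQuotientMap π₁) (h₂ : IsQuotientMap π₂) :
    IsQuotientMap (H := H₁.union H₂) (H' := H₁'.union H₂') (Sum.map π₁ π₂) where
  surjective := Sum.map_surjective.2 ⟨h₁.surjective, h₂.surjective⟩
  adj_iff x y := by
    rcases x with x | x <;> rcases y with y | y
    · simp [union, h₁.adj_iff]
    · simp [union]
    · simp [union]
    · simp [union, h₂.adj_iff]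

variable {H₁ H₂ : LGraph k} {π : H.V → H'.V}

theorem join {a b a' b' : Fin k} (hπ : IsQuotientMap π)
    (ha : ∀ u, H'.lab (π u) = a' ↔ ∃ u', π u' = π u ∧ H.lab u' = a)
    (hb : ∀ u, H'.lab (π u) = b' ↔ ∃ u', π u' = π u ∧ H.lab u' = b) :
    IsQuotientMap (H := H.join a b) (H' := H'.join a' b') π where
  surjective := hπ.surjective
  adj_iff x y := by
    obtain ⟨u, rfl⟩ := hπ.surjective x
    obtain ⟨v, rfl⟩ := hπ.surjective y
    show H'.G.Adj _ _ ∨ _ ↔ _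
    rw [hπ.adj_iff]
    constructor
    · rintro (⟨huv, u', v', hu', hv', h⟩ | ⟨huv, ⟨hu, hv⟩ | ⟨hu, hv⟩⟩)
      · exact ⟨huv, u', v', hu', hv', Or.inl h⟩
      · obtain ⟨u', hu', hu'a⟩ := (ha u).1 hu
        obtain ⟨v', hv', hv'b⟩ := (hb v).1 hv
        exact ⟨huv, u', v', hu', hv', Or.inr ⟨ne_of_apply_ne π (by rwa [hu', hv']),
          Or.inl ⟨hu'a, hv'b⟩⟩⟩
      · obtain ⟨u', hu', hu'b⟩ := (hb u).1 hu
        obtain ⟨v', hv', hv'a⟩ := (ha v).1 hv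
        exact ⟨huv, u', v', hu', hv', Or.inr ⟨ne_of_apply_ne π (by rwa [hu', hv']),
          Or.inr ⟨hu'b, hv'a⟩⟩⟩
    · rintro ⟨huv, u', v', hu', hv', h | ⟨-, ⟨hu'a, hv'b⟩ | ⟨hu'b, hv'a⟩⟩⟩
      · exact Or.inl ⟨huv, u', v', hu', hv', h⟩
      · exact Or.inr ⟨huv, Or.inl ⟨(ha u).2 ⟨u', hu', hu'a⟩, (hb v).2 ⟨v', hv', hv'b⟩⟩⟩
      · exact Or.inr ⟨huv, Or.inr ⟨(hb u).2 ⟨u', hu', hu'b⟩, (ha v).2 ⟨v', hv', hv'a⟩⟩⟩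

theorem join_of_map_eq {a b : Fin k} (hπ : IsQuotientMap π)
    (h : ∀ u v, H.lab u = a → H.lab v = b → π u = π v) :
    IsQuotientMap (H := H.join a b) (H' := H') π where
  surjective := hπ.surjective
  adj_iff x y := by
    rw [hπ.adj_iff]
    constructor
    · rintro ⟨hxy, u, v, hu, hv, huv⟩
      exact ⟨hxy, u, v, hu, hv, Or.inl huv⟩
    · rintro ⟨hxy, u, v, rfl, rfl, huv | ⟨-, ⟨hu, hv⟩ | ⟨hu, hv⟩⟩⟩
      · exact ⟨hxy, u, v, rfl, rfl, huv⟩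
      · exact absurd (h u v hu hv) hxy
      · exact absurd (h v u hv hu).symm hxy

theorem relabel_left {a b : Fin k} (hπ : IsQuotientMap π) :
    IsQuotientMap (H := H.relabel a b) (H' := H') π :=
  ⟨hπ.surjective, hπ.adj_iff⟩

theorem relabel_right {a b : Fin k} (hπ : IsQuotientMap π) :
    IsQuotientMap (H := H) (H' := H'.relabel a b) π :=
  ⟨hπ.surjective, hπ.adj_iff⟩

theorem liso {π₁ : H.V → H₁.V} {π₂ : H.V → H₂.V} (h₁ : IsQuotientMap π₁)
    (h₂ : IsQuotientMap π₂) (hker : ∀ u v, π₁ u = π₁ v ↔ π₂ u = π₂ v)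
    (hlab : ∀ u, H₁.lab (π₁ u) = H₂.lab (π₂ u)) : LIso H₁ H₂ := by
  obtain ⟨f, hf⟩ := Function.FactorsThrough.exists_comp_eq (fun u v => (hker u v).1) h₁.surjective
  have hfπ : ∀ u, f (π₁ u) = π₂ u := congrFun hf
  have hinj : Function.Injective f := by
    intro x y hxy
    obtain ⟨u, rfl⟩ := h₁.surjective x
    obtain ⟨v, rfl⟩ := h₁.surjective y
    rw [hfπ, hfπ] at hxy
    exact (hker u v).2 hxy
  have hsurj : Function.Surjective f := fun y =>
    let ⟨u, hu⟩ := h₂.surjective y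
    ⟨π₁ u, (hfπ u).trans hu⟩
  have hbij : Function.Bijective f := ⟨hinj, hsurj⟩
  refine LIso.mk' (Equiv.ofBijective f hbij) (fun x y => ?_) (fun x => ?_)
  · obtain ⟨u, rfl⟩ := h₁.surjective x
    obtain ⟨v, rfl⟩ := h₁.surjective y
    simp only [Equiv.ofBijective_apply, hfπ, h₁.adj_iff, h₂.adj_iff, ne_eq, hker]
  · obtain ⟨u, rfl⟩ := h₁.surjective x
    rw [Equiv.ofBijective_apply, hfπ, hlab]

end IsQuotientMap

def fuseMap (i : Fin k) (H : LGraph k) (v : H.V) : (H.fuse i).V :=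
  if h : H.lab v = i then none else some ⟨v, h⟩

structure IsMerge (S : Fin k → Prop) (i : Fin k) {H H' : LGraph k} (π : H.V → H'.V) : Prop
    extends IsQuotientMap π where
  map_eq_map_iff : ∀ u v, π u = π v ↔ u = v ∨ S (H.lab u) ∧ S (H.lab v)
  lab_map_of_mem : ∀ u, S (H.lab u) → H'.lab (π u) = i
  lab_map_of_not_mem : ∀ u, ¬ S (H.lab u) → H'.lab (π u) = H.lab u

section fuseMap

variable {i : Fin k} {H : LGraph k} {v : H.V}

theorem fuseMap_of_lab_eq (h : H.lab v = i) : fuseMap i H v = none := dif_pos h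

theorem fuseMap_of_lab_ne (h : H.lab v ≠ i) : fuseMap i H v = some ⟨v, h⟩ := dif_neg h

theorem fuseMap_eq_none : fuseMap i H v = none ↔ H.lab v = i := by
  by_cases h : H.lab v = i
  · exact iff_of_true (fuseMap_of_lab_eq h) h
  · rw [fuseMap_of_lab_ne h]
    exact iff_of_false (Option.some_ne_none _) h

theorem fuseMap_eq_some {x : {v : H.V // H.lab v ≠ i}} : fuseMap i H v = some x ↔ v = x.1 := by
  by_cases h : H.lab v = i
  · rw [fuseMap_of_lab_eq h]
    exact iff_of_false (Option.some_ne_none _).symm fun hv => x.2 (hv ▸ h)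
  · rw [fuseMap_of_lab_ne h]
    exact ⟨fun hx => congrArg Subtype.val (Option.some_injective _ hx),
      fun hv => congrArg some (Subtype.ext hv)⟩

theorem lab_fuseMap (v : H.V) : (H.fuse i).lab (fuseMap i H v) = H.lab v := by
  rcases hv : fuseMap i H v with _ | x
  · exact (fuseMap_eq_none.1 hv).symm
  · rw [fuseMap_eq_some.1 hv]
    rfl

theorem isMerge_fuseMap (h : ∃ v, H.lab v = i) : IsMerge (· = i) i (fuseMap i H) where
  surjective := by
    rintro (_ | x)
    · exact h.imp fun w => fuseMap_eq_none.2
    · exact ⟨x.1, fuseMap_eq_some.2 rfl⟩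
  adj_iff := by
    rintro (_ | x) (_ | y)
    · simp [fuse]
    · show (∃ w, H.lab w = i ∧ H.G.Adj w y.1) ↔ _
      simp [fuseMap_eq_none, fuseMap_eq_some]
      exact fun _ _ _ => (Option.some_ne_none y).symm
    · show (∃ w, H.lab w = i ∧ H.G.Adj x.1 w) ↔ _
      simp [fuseMap_eq_none, fuseMap_eq_some]
      exact fun _ _ _ => Option.some_ne_none x
    · show H.G.Adj x.1 y.1 ↔ _
      simp only [fuseMap_eq_some, exists_and_left, exists_eq_left]
      exact ⟨fun hxy => ⟨fun h => hxy.ne (congrArg Subtype.val (Option.some_injective _ h)), hxy⟩,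
        And.right⟩
  map_eq_map_iff u v := by
    rcases hv : fuseMap i H v with _ | x
    · rw [fuseMap_eq_none] at hv ⊢
      exact ⟨fun hu => Or.inr ⟨hu, hv⟩, by rintro (rfl | ⟨hu, -⟩) <;> assumption⟩
    · rw [fuseMap_eq_some] at hv ⊢
      subst hv
      exact ⟨Or.inl, by rintro (h | ⟨-, h⟩); exacts [h, absurd h x.2]⟩
  lab_map_of_mem u hu := (lab_fuseMap u).trans hu
  lab_map_of_not_mem u _ := lab_fuseMap u

end fuseMap

theorem isMerge_id {S : Fin k → Prop} {H : LGraph k} (h : ∀ v, ¬ S (H.lab v)) (i : Fin k) :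
    IsMerge S i (id : H.V → H.V) where
  toIsQuotientMap := IsQuotientMap.of_iso (RelIso.refl _)
  map_eq_map_iff u v := by simp [h]
  lab_map_of_mem u hu := absurd hu (h u)
  lab_map_of_not_mem _ _ := rfl

theorem isMerge_singleVertex {S : Fin k → Prop} {j : Fin k} (hj : S j) (i : Fin k) :
    IsMerge S i (H := FuseExpr.singleVertex j) (H' := FuseExpr.singleVertex i) id where
  surjective := Function.surjective_id
  adj_iff x y := iff_of_false (SimpleGraph.bot_adj x y).1
    fun h => h.1 (Subsingleton.elim (α := PUnit) x y)
  map_eq_map_iff u v := iff_of_true rfl (Or.inl (Subsingleton.elim (α := PUnit) u v))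
  lab_map_of_mem _ _ := rfl
  lab_map_of_not_mem _ hu := absurd hj hu

namespace IsMerge

variable {S : Fin k → Prop} {i j a b t : Fin k} {H H' : LGraph k} {π : H.V → H'.V}

theorem lab_map_eq_self_iff (hπ : IsMerge S i π) (hi : S i) (u : H.V) :
    H'.lab (π u) = i ↔ S (H.lab u) := by
  by_cases hu : S (H.lab u)
  · exact iff_of_true (hπ.lab_map_of_mem u hu) hu
  · rw [hπ.lab_map_of_not_mem u hu]
    exact iff_of_false (fun h => hu (h ▸ hi)) hu

theorem lab_map_eq_iff (hπ : IsMerge S i π) (hi : S i) (hj : ¬ S j) (u : H.V) :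
    H'.lab (π u) = j ↔ H.lab u = j := by
  by_cases hu : S (H.lab u)
  · rw [hπ.lab_map_of_mem u hu]
    exact iff_of_false (fun h => hj (h ▸ hi)) (fun h => hj (h ▸ hu))
  · rw [hπ.lab_map_of_not_mem u hu]

theorem lab_map_eq_iff_exists (hπ : IsMerge S i π) (hi : S i) (ha : ¬ S a) (u : H.V) :
    H'.lab (π u) = a ↔ ∃ u', π u' = π u ∧ H.lab u' = a := by
  rw [hπ.lab_map_eq_iff hi ha]
  refine ⟨fun h => ⟨u, rfl, h⟩, fun ⟨u', hu', h⟩ => ?_⟩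
  rw [← hπ.lab_map_eq_iff hi ha, ← hu', hπ.lab_map_eq_iff hi ha, h]

theorem lab_map_eq_self_iff_exists (hπ : IsMerge S i π) (hi : S i) (ha : S a) {w : H.V}
    (hw : H.lab w = a) (u : H.V) :
    H'.lab (π u) = i ↔ ∃ u', π u' = π u ∧ H.lab u' = a := by
  rw [hπ.lab_map_eq_self_iff hi]
  refine ⟨fun hu => ⟨w, (hπ.map_eq_map_iff w u).2 (Or.inr ⟨hw ▸ ha, hu⟩), hw⟩,
    fun ⟨u', hu', h⟩ => ?_⟩
  rw [← hπ.lab_map_eq_self_iff hi, ← hu', hπ.lab_map_eq_self_iff hi, h]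
  exact ha

theorem liso {H₁ H₂ : LGraph k} {π₁ : H.V → H₁.V} {π₂ : H.V → H₂.V} (h₁ : IsMerge S i π₁)
    (h₂ : IsMerge S i π₂) : LIso H₁ H₂ := by
  refine h₁.toIsQuotientMap.liso h₂.toIsQuotientMap
    (fun u v => (h₁.map_eq_map_iff u v).trans (h₂.map_eq_map_iff u v).symm) (fun u => ?_)
  by_cases hu : S (H.lab u)
  · rw [h₁.lab_map_of_mem u hu, h₂.lab_map_of_mem u hu]
  · rw [h₁.lab_map_of_not_mem u hu, h₂.lab_map_of_not_mem u hu]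

theorem comp_iso {H₀ : LGraph k} (hπ : IsMerge S i π) (e : H₀.G ≃g H.G)
    (he : ∀ v, H.lab (e v) = H₀.lab v) : IsMerge S i (π ∘ e) where
  toIsQuotientMap := hπ.toIsQuotientMap.comp (IsQuotientMap.of_iso e)
  map_eq_map_iff u v := by
    rw [Function.comp_apply, Function.comp_apply, hπ.map_eq_map_iff, e.injective.eq_iff, he, he]
  lab_map_of_mem u hu := hπ.lab_map_of_mem (e u) (by rwa [he])
  lab_map_of_not_mem u hu := (hπ.lab_map_of_not_mem (e u) (by rwa [he])).trans (he u)

theorem exists_of_liso {H'' : LGraph k} (hπ : IsMerge S i π) (h : LIso H' H'') :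
    ∃ π' : H.V → H''.V, IsMerge S i π' := by
  obtain ⟨e, he⟩ := h
  exact ⟨e ∘ π, {
    toIsQuotientMap := (IsQuotientMap.of_iso e).comp hπ.toIsQuotientMap
    map_eq_map_iff := fun u v => e.injective.eq_iff.trans (hπ.map_eq_map_iff u v)
    lab_map_of_mem := fun u hu => (he _).trans (hπ.lab_map_of_mem u hu)
    lab_map_of_not_mem := fun u hu => (he _).trans (hπ.lab_map_of_not_mem u hu) }⟩

theorem exactlyOne_self (hπ : IsMerge S i π) (hi : S i) (hex : ∃ v, S (H.lab v)) :
    ExactlyOne H' i := by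
  obtain ⟨w, hw⟩ := hex
  refine ⟨π w, hπ.lab_map_of_mem w hw, fun x hx => ?_⟩
  obtain ⟨u, rfl⟩ := hπ.surjective x
  exact (hπ.map_eq_map_iff u w).2 (Or.inr ⟨(hπ.lab_map_eq_self_iff hi u).1 hx, hw⟩)

theorem exactlyOne (hπ : IsMerge S i π) (hi : S i) (hj : ¬ S j) (h : ExactlyOne H j) :
    ExactlyOne H' j := by
  obtain ⟨v, hv, huniq⟩ := h
  refine ⟨π v, (hπ.lab_map_eq_iff hi hj v).2 hv, fun x hx => ?_⟩
  obtain ⟨u, rfl⟩ := hπ.surjective x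
  rw [huniq u ((hπ.lab_map_eq_iff hi hj u).1 hx)]

theorem exactlyTwo (hπ : IsMerge S i π) (hi : S i) (hj : ¬ S j) (h : ExactlyTwo H j) :
    ExactlyTwo H' j := by
  obtain ⟨u, v, huv, hu, hv, hall⟩ := h
  refine ⟨π u, π v, fun h => ?_, (hπ.lab_map_eq_iff hi hj u).2 hu,
    (hπ.lab_map_eq_iff hi hj v).2 hv, fun x hx => ?_⟩
  · rcases (hπ.map_eq_map_iff u v).1 h with h | ⟨hSu, -⟩
    exacts [huv h, hj (hu ▸ hSu)]
  · obtain ⟨w, rfl⟩ := hπ.surjective x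
    exact (hall w ((hπ.lab_map_eq_iff hi hj w).1 hx)).imp (congrArg π) (congrArg π)


theorem join {a' b' : Fin k} (hπ : IsMerge S i π)
    (ha : ∀ u, H'.lab (π u) = a' ↔ ∃ u', π u' = π u ∧ H.lab u' = a)
    (hb : ∀ u, H'.lab (π u) = b' ↔ ∃ u', π u' = π u ∧ H.lab u' = b) :
    IsMerge S i (H := H.join a b) (H' := H'.join a' b') π :=
  ⟨hπ.toIsQuotientMap.join ha hb, hπ.map_eq_map_iff, hπ.lab_map_of_mem, hπ.lab_map_of_not_mem⟩

theorem join_of_mem (hπ : IsMerge S i π) (ha : S a) (hb : S b) :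
    IsMerge S i (H := H.join a b) (H' := H') π :=
  ⟨hπ.toIsQuotientMap.join_of_map_eq fun u v hu hv =>
      (hπ.map_eq_map_iff u v).2 (Or.inr ⟨hu ▸ ha, hv ▸ hb⟩),
    hπ.map_eq_map_iff, hπ.lab_map_of_mem, hπ.lab_map_of_not_mem⟩

theorem relabel_of_mem (hπ : IsMerge (fun c => S c ∨ c = a) i π) (hb : S b) :
    IsMerge S i (H := H.relabel a b) (H' := H') π := by
  have hS : ∀ u, S ((H.relabel a b).lab u) ↔ S (H.lab u) ∨ H.lab u = a := by
    intro u
    show S (if H.lab u = a then b else H.lab u) ↔ _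
    split_ifs with h <;> simp [h, hb]
  refine ⟨hπ.relabel_left, fun u v => by rw [hS, hS]; exact hπ.map_eq_map_iff u v,
    fun u hu => hπ.lab_map_of_mem u ((hS u).1 hu), fun u hu => ?_⟩
  rw [hS, not_or] at hu
  exact (hπ.lab_map_of_not_mem u (not_or.2 hu)).trans (if_neg hu.2).symm

theorem relabel (hπ : IsMerge (fun c => S c ∧ c ≠ a) t π) (hb : ¬ S b) (hta : t ≠ a) :
    IsMerge S t (H := H.relabel a b) (H' := H'.relabel a b) π := by
  have hS : ∀ u, S ((H.relabel a b).lab u) ↔ S (H.lab u) ∧ H.lab u ≠ a := by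
    intro u
    show S (if H.lab u = a then b else H.lab u) ↔ _
    split_ifs with h <;> simp [h, hb]
  refine ⟨hπ.relabel_left.relabel_right, fun u v => by rw [hS, hS]; exact hπ.map_eq_map_iff u v,
    fun u hu => ?_, fun u hu => ?_⟩
  · show (if H'.lab (π u) = a then b else H'.lab (π u)) = t
    rw [hπ.lab_map_of_mem u ((hS u).1 hu), if_neg hta]
  · show (if H'.lab (π u) = a then b else H'.lab (π u)) = (if H.lab u = a then b else H.lab u)
    rw [hπ.lab_map_of_not_mem u (by rwa [← hS])]

theorem relabel_merged (hπ : IsMerge S t π) (ht : S t) (i : Fin k) :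
    IsMerge S i (H' := H'.relabel t i) π := by
  refine ⟨hπ.relabel_right, hπ.map_eq_map_iff, fun u hu => ?_, fun u hu => ?_⟩
  · show (if H'.lab (π u) = t then i else H'.lab (π u)) = i
    rw [hπ.lab_map_of_mem u hu, if_pos rfl]
  · show (if H'.lab (π u) = t then i else H'.lab (π u)) = H.lab u
    rw [hπ.lab_map_of_not_mem u hu, if_neg (show H.lab u ≠ t from fun h => hu (h ▸ ht))]


section union

variable {H₁ H₂ H₁' H₂' : LGraph k} {π₁ : H₁.V → H₁'.V} {π₂ : H₂.V → H₂'.V}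

theorem sumMap_eq_sumMap (h₁ : IsMerge S i π₁) (h₂ : IsMerge S i π₂) {x y : H₁.V ⊕ H₂.V}
    (h : Sum.map π₁ π₂ x = Sum.map π₁ π₂ y) :
    x = y ∨ S ((H₁.union H₂).lab x) ∧ S ((H₁.union H₂).lab y) := by
  rcases x with u | u <;> rcases y with v | v <;> simp only [Sum.map_inl, Sum.map_inr,
    Sum.inl.injEq, Sum.inr.injEq, reduceCtorEq] at h
  · simpa [union] using (h₁.map_eq_map_iff u v).1 h
  · simpa [union] using (h₂.map_eq_map_iff u v).1 h

theorem sumMap (h₁ : IsMerge S i π₁) (h₂ : IsMerge S i π₂)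
    (hS : ¬ ((∃ v, S (H₁.lab v)) ∧ ∃ v, S (H₂.lab v))) :
    IsMerge S i (H := H₁.union H₂) (H' := H₁'.union H₂') (Sum.map π₁ π₂) where
  toIsQuotientMap := h₁.toIsQuotientMap.sumMap h₂.toIsQuotientMap
  map_eq_map_iff x y := by
    refine ⟨h₁.sumMap_eq_sumMap h₂, ?_⟩
    rintro (rfl | ⟨hx, hy⟩)
    · rfl
    rcases x with u | u <;> rcases y with v | v
    · exact congrArg Sum.inl ((h₁.map_eq_map_iff u v).2 (Or.inr ⟨hx, hy⟩))
    · exact absurd ⟨⟨u, hx⟩, ⟨v, hy⟩⟩ hS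
    · exact absurd ⟨⟨v, hy⟩, ⟨u, hx⟩⟩ hS
    · exact congrArg Sum.inr ((h₂.map_eq_map_iff u v).2 (Or.inr ⟨hx, hy⟩))
  lab_map_of_mem := by
    rintro (u | u) hu
    exacts [h₁.lab_map_of_mem u hu, h₂.lab_map_of_mem u hu]
  lab_map_of_not_mem := by
    rintro (u | u) hu
    exacts [h₁.lab_map_of_not_mem u hu, h₂.lab_map_of_not_mem u hu]

theorem fuseMap_comp_sumMap (h₁ : IsMerge S i π₁) (h₂ : IsMerge S i π₂) (hi : S i)
    (hex : ∃ v, S (H₁.lab v)) :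
    IsMerge S i (H := H₁.union H₂) (fuseMap i (H₁'.union H₂') ∘ Sum.map π₁ π₂) := by
  have hsum := h₁.toIsQuotientMap.sumMap h₂.toIsQuotientMap
  obtain ⟨w, hw⟩ := hex
  have hfuse := isMerge_fuseMap (H := H₁'.union H₂') ⟨Sum.inl (π₁ w), h₁.lab_map_of_mem w hw⟩
  have hlab : ∀ x : (H₁.union H₂).V,
      (H₁'.union H₂').lab (Sum.map π₁ π₂ x) = i ↔ S ((H₁.union H₂).lab x) := by
    rintro (u | u)
    exacts [h₁.lab_map_eq_self_iff hi u, h₂.lab_map_eq_self_iff hi u]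
  refine ⟨hfuse.toIsQuotientMap.comp hsum, fun x y => ?_, fun x hx => ?_, fun x hx => ?_⟩
  · refine (hfuse.map_eq_map_iff _ _).trans ?_
    rw [hlab, hlab]
    refine ⟨fun h => h.elim (h₁.sumMap_eq_sumMap h₂) Or.inr, ?_⟩
    rintro (rfl | h)
    exacts [Or.inl rfl, Or.inr h]
  · exact (lab_fuseMap _).trans ((hlab x).2 hx)
  · refine (lab_fuseMap _).trans ?_
    rcases x with u | u
    exacts [h₁.lab_map_of_not_mem u hx, h₂.lab_map_of_not_mem u hx]

end union

section fuse

theorem exists_of_fuse {g : H.V → H'.V} (hj : ∃ v, H.lab v = j) (hg : IsQuotientMap g)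
    (hker : ∀ u v, g u = g v ↔ (u = v ∨ H.lab u = j ∧ H.lab v = j) ∨ S (H.lab u) ∧ S (H.lab v))
    (hmem : ∀ u, S (H.lab u) → H'.lab (g u) = i)
    (hnot : ∀ u, ¬ S (H.lab u) → H'.lab (g u) = H.lab u) :
    ∃ π : (H.fuse j).V → H'.V, IsMerge S i π := by
  have hι := isMerge_fuseMap hj
  obtain ⟨π, rfl⟩ := Function.FactorsThrough.exists_comp_eq
    (fun u v huv => (hker u v).2 (Or.inl ((hι.map_eq_map_iff u v).1 huv))) hι.surjective
  refine ⟨π, hg.of_comp hι.toIsQuotientMap, fun p q => ?_, fun p hp => ?_, fun p hp => ?_⟩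
  · obtain ⟨u, rfl⟩ := hι.surjective p
    obtain ⟨v, rfl⟩ := hι.surjective q
    rw [hι.map_eq_map_iff, lab_fuseMap, lab_fuseMap]
    exact hker u v
  · obtain ⟨u, rfl⟩ := hι.surjective p
    rw [lab_fuseMap] at hp
    exact hmem u hp
  · obtain ⟨u, rfl⟩ := hι.surjective p
    rw [lab_fuseMap] at hp ⊢
    exact hnot u hp

theorem exists_fuse_of_mem (hπ : IsMerge S i π) (hj : ∃ v, H.lab v = j)
    (hSj : S j) : ∃ π' : (H.fuse j).V → H'.V, IsMerge S i π' := by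
  refine exists_of_fuse hj hπ.toIsQuotientMap (fun u v => ?_) hπ.lab_map_of_mem
    hπ.lab_map_of_not_mem
  rw [hπ.map_eq_map_iff]
  refine ⟨Or.imp_left Or.inl, fun h => h.elim (Or.imp_right ?_) Or.inr⟩
  rintro ⟨hu, hv⟩
  exact ⟨hu ▸ hSj, hv ▸ hSj⟩

theorem exists_fuse (hπ : IsMerge S i π) (hi : S i) (hj : ∃ v, H.lab v = j)
    (hSj : ¬ S j) : ∃ π' : (H.fuse j).V → (H'.fuse j).V, IsMerge S i π' := by
  obtain ⟨w, hw⟩ := hj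
  have hκ := isMerge_fuseMap ⟨π w, (hπ.lab_map_eq_iff hi hSj w).2 hw⟩
  refine exists_of_fuse ⟨w, hw⟩ (hκ.toIsQuotientMap.comp hπ.toIsQuotientMap) (fun u v => ?_)
    (fun u hu => (lab_fuseMap _).trans (hπ.lab_map_of_mem u hu))
    (fun u hu => (lab_fuseMap _).trans (hπ.lab_map_of_not_mem u hu))
  rw [Function.comp_apply, Function.comp_apply, hκ.map_eq_map_iff, hπ.map_eq_map_iff,
    hπ.lab_map_eq_iff hi hSj, hπ.lab_map_eq_iff hi hSj]
  tauto

end fuse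

end IsMerge

end LGraph

namespace FuseExpr

open LGraph

variable {k : ℕ} {a b i j : Fin k}

abbrev IsClean (χ : FuseExpr k) : Prop :=
  χ.NoUseless ∧ χ.FusesExactlyTwoFromDifferentSides

theorem IsClean.union {χ₁ χ₂ : FuseExpr k} (h₁ : χ₁.IsClean) (h₂ : χ₂.IsClean) :
    (union χ₁ χ₂).IsClean :=
  ⟨⟨h₁.1, h₂.1⟩, h₁.2, h₂.2⟩

theorem IsClean.fuse {χ : FuseExpr k} (h : χ.IsClean) (h₂ : ExactlyTwo χ.eval i)
    (hch : χ.ChainWithOneFromEachSide i) : (fuse i χ).IsClean := by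
  obtain ⟨u, v, huv, hu, hv, -⟩ := id h₂
  exact ⟨⟨⟨u, v, huv, hu, hv⟩, h.1⟩, h₂, hch, h.2⟩

theorem IsClean.exists_join {χ : FuseExpr k} (h : χ.IsClean) (hab : a ≠ b) :
    ∃ χ' : FuseExpr k, LIso χ'.eval (χ.eval.join a b) ∧ χ'.IsClean := by
  by_cases huse : joinUseful a b χ.eval
  · exact ⟨join a b χ, LIso.refl _, ⟨hab, huse, h.1⟩, h.2⟩
  · exact ⟨χ, (join_liso_self huse).symm, h⟩

theorem IsClean.exists_relabel {χ : FuseExpr k} (h : χ.IsClean) (a b : Fin k) :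
    ∃ χ' : FuseExpr k, LIso χ'.eval (χ.eval.relabel a b) ∧ χ'.IsClean := by
  by_cases huse : a ≠ b ∧ relabelUseful a χ.eval
  · exact ⟨relabel a b χ, LIso.refl _, ⟨huse.1, huse.2, h.1⟩, h.2⟩
  · exact ⟨χ, (relabel_liso_self (not_and_or.1 huse |>.imp_left not_not.1)).symm, h⟩

/-- The last clause keeps the fuses above `ψ` valid above `χ`. -/
def IsCleanMerge (S : Fin k → Prop) (i : Fin k) (ψ χ : FuseExpr k) : Prop :=
  (∃ π : ψ.eval.V → χ.eval.V, IsMerge S i π) ∧ χ.IsClean ∧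
    ∀ j, ¬ S j → ψ.ChainWithOneFromEachSide j → χ.ChainWithOneFromEachSide j

def HasCleanMerges (ψ : FuseExpr k) : Prop :=
  ∀ (S : Fin k → Prop) (i : Fin k), S i → (∃ v, S (ψ.eval.lab v)) → ∃ χ, IsCleanMerge S i ψ χ

theorem hasCleanMerges_intro (j : Fin k) : (intro j).HasCleanMerges :=
  fun _ i _ ⟨_, hj⟩ => ⟨intro i, ⟨id, isMerge_singleVertex hj i⟩, ⟨trivial, trivial⟩, nofun⟩

theorem HasCleanMerges.exists_isMerge {ψ : FuseExpr k} (h : ψ.HasCleanMerges) (hψ : ψ.IsClean)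
    {S : Fin k → Prop} (hi : S i) :
    ∃ χ : FuseExpr k, (∃ π : ψ.eval.V → χ.eval.V, IsMerge S i π) ∧ χ.IsClean := by
  by_cases hex : ∃ v, S (ψ.eval.lab v)
  · obtain ⟨χ, hπ, hχ, -⟩ := h S i hi hex
    exact ⟨χ, hπ, hχ⟩
  · exact ⟨ψ, ⟨id, isMerge_id (fun v hv => hex ⟨v, hv⟩) i⟩, hψ⟩

theorem HasCleanMerges.union {ψ₁ ψ₂ : FuseExpr k} (h₁ : ψ₁.HasCleanMerges)
    (h₂ : ψ₂.HasCleanMerges) (hψ₁ : ψ₁.IsClean) (hψ₂ : ψ₂.IsClean) :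
    (FuseExpr.union ψ₁ ψ₂).HasCleanMerges := by
  intro S i hi _
  obtain ⟨χ₁, ⟨π₁, hπ₁⟩, hχ₁⟩ := h₁.exists_isMerge hψ₁ hi
  obtain ⟨χ₂, ⟨π₂, hπ₂⟩, hχ₂⟩ := h₂.exists_isMerge hψ₂ hi
  have hchain : ∀ j, ¬ S j → (FuseExpr.union ψ₁ ψ₂).ChainWithOneFromEachSide j →
      (FuseExpr.union χ₁ χ₂).ChainWithOneFromEachSide j :=
    fun j hj ⟨h₁, h₂⟩ => ⟨hπ₁.exactlyOne hi hj h₁, hπ₂.exactlyOne hi hj h₂⟩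
  by_cases hboth : (∃ v, S (ψ₁.eval.lab v)) ∧ ∃ v, S (ψ₂.eval.lab v)
  · have hE₁ := hπ₁.exactlyOne_self hi hboth.1
    have hE₂ := hπ₂.exactlyOne_self hi hboth.2
    exact ⟨fuse i (FuseExpr.union χ₁ χ₂), ⟨_, hπ₁.fuseMap_comp_sumMap hπ₂ hi hboth.1⟩,
      (hχ₁.union hχ₂).fuse (exactlyTwo_union hE₁ hE₂) ⟨hE₁, hE₂⟩, hchain⟩
  · exact ⟨FuseExpr.union χ₁ χ₂, ⟨_, hπ₁.sumMap hπ₂ hboth⟩, hχ₁.union hχ₂, hchain⟩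

theorem HasCleanMerges.join {ψ : FuseExpr k} (h : ψ.HasCleanMerges) (hab : a ≠ b)
    (hju : joinUseful a b ψ.eval) : (FuseExpr.join a b ψ).HasCleanMerges := by
  intro S i hi hex
  obtain ⟨u, v, -, hu, hv, -⟩ := hju
  obtain ⟨χ, ⟨π, hπ⟩, hχ, -⟩ := h S i hi hex
  have joined : ∀ {a' b'}, a' ≠ b' →
      (∀ x, χ.eval.lab (π x) = a' ↔ ∃ x', π x' = π x ∧ ψ.eval.lab x' = a) →
      (∀ x, χ.eval.lab (π x) = b' ↔ ∃ x', π x' = π x ∧ ψ.eval.lab x' = b) →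
      ∃ χ', IsCleanMerge S i (FuseExpr.join a b ψ) χ' := by
    intro a' b' hab' ha hb
    obtain ⟨χ', l, hχ'⟩ := hχ.exists_join hab'
    exact ⟨χ', (hπ.join ha hb).exists_of_liso l.symm, hχ', nofun⟩
  by_cases ha : S a <;> by_cases hb : S b
  · exact ⟨χ, ⟨π, hπ.join_of_mem ha hb⟩, hχ, nofun⟩
  · exact joined (show i ≠ b from fun h => hb (h ▸ hi)) (hπ.lab_map_eq_self_iff_exists hi ha hu)
      (hπ.lab_map_eq_iff_exists hi hb)
  · exact joined (show a ≠ i from fun h => ha (h ▸ hi)) (hπ.lab_map_eq_iff_exists hi ha)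
      (hπ.lab_map_eq_self_iff_exists hi hb hv)
  · exact joined hab (hπ.lab_map_eq_iff_exists hi ha) (hπ.lab_map_eq_iff_exists hi hb)

theorem HasCleanMerges.relabel {ψ : FuseExpr k} (h : ψ.HasCleanMerges) (a b : Fin k) :
    (FuseExpr.relabel a b ψ).HasCleanMerges := by
  intro S i hi ⟨v, hv⟩
  change S (if ψ.eval.lab v = a then b else ψ.eval.lab v) at hv
  by_cases hb : S b
  · have hv' : S (ψ.eval.lab v) ∨ ψ.eval.lab v = a := by
      split_ifs at hv with h
      exacts [Or.inr h, Or.inl hv]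
    obtain ⟨χ, ⟨π, hπ⟩, hχ, -⟩ := h (fun c => S c ∨ c = a) i (Or.inl hi) ⟨v, hv'⟩
    exact ⟨χ, ⟨π, hπ.relabel_of_mem hb⟩, hχ, nofun⟩
  · have hva : ψ.eval.lab v ≠ a := fun h => hb (by rwa [if_pos h] at hv)
    rw [if_neg hva] at hv
    -- `i` may be `a`, so merge into the label of `v`, which `ρ_{a→b}` keeps, and rename it last
    obtain ⟨χ, ⟨π, hπ⟩, hχ, -⟩ := h (fun c => S c ∧ c ≠ a) _ ⟨hv, hva⟩ ⟨v, hv, hva⟩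
    obtain ⟨χ₁, l₁, hχ₁⟩ := hχ.exists_relabel a b
    obtain ⟨χ₂, l₂, hχ₂⟩ := hχ₁.exists_relabel (ψ.eval.lab v) i
    exact ⟨χ₂, ((hπ.relabel hb hva).relabel_merged hv i).exists_of_liso
      ((relabel_congr l₁.symm).trans l₂.symm), hχ₂, nofun⟩

theorem HasCleanMerges.fuse {ψ : FuseExpr k} (h : ψ.HasCleanMerges) (h₂ : ExactlyTwo ψ.eval j)
    (hch : ψ.ChainWithOneFromEachSide j) : (FuseExpr.fuse j ψ).HasCleanMerges := by
  intro S i hi hex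
  obtain ⟨w, -, -, hw, -⟩ := id h₂
  have hex' : ∃ v, S (ψ.eval.lab v) := by
    match hex with
    | ⟨none, hx⟩ => exact ⟨w, by rw [hw]; exact hx⟩
    | ⟨some v, hx⟩ => exact ⟨v.1, hx⟩
  obtain ⟨χ, ⟨π, hπ⟩, hχ, hchain⟩ := h S i hi hex'
  by_cases hSj : S j
  · exact ⟨χ, hπ.exists_fuse_of_mem ⟨w, hw⟩ hSj, hχ, hchain⟩
  · exact ⟨FuseExpr.fuse j χ, hπ.exists_fuse hi ⟨w, hw⟩ hSj,
      hχ.fuse (hπ.exactlyTwo hi hSj h₂) (hchain j hSj hch), hchain⟩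

theorem IsClean.hasCleanMerges {ψ : FuseExpr k} (h : ψ.IsClean) : ψ.HasCleanMerges := by
  induction ψ with
  | intro j => exact hasCleanMerges_intro j
  | union ψ₁ ψ₂ ih₁ ih₂ =>
    have hψ₁ : ψ₁.IsClean := ⟨h.1.1, h.2.1⟩
    have hψ₂ : ψ₂.IsClean := ⟨h.1.2, h.2.2⟩
    exact (ih₁ hψ₁).union (ih₂ hψ₂) hψ₁ hψ₂
  | join a b ψ ih => exact (ih ⟨h.1.2.2, h.2⟩).join h.1.1 h.1.2.1
  | relabel a b ψ ih => exact (ih ⟨h.1.2.2, h.2⟩).relabel a b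
  | fuse j ψ ih => exact (ih ⟨h.1.2, h.2.2.2⟩).fuse h.2.1 h.2.2.1

end FuseExpr

/-- Every fuse-`k`-expression can be transformed into an equivalent
one without useless operator occurrences in which the argument of every fuse node
`θ_i` is a chain of fuse nodes over a union, contains exactly two vertices of label
`i`, one coming from each side of the union. -/
theorem exists_fuses_exactly_two_from_different_sides {k : ℕ} (φ : FuseExpr k)
    (hwf : φ.WF) :
    ∃ φ' : FuseExpr k, LGraph.LIso φ'.eval φ.eval ∧ φ'.NoUseless ∧
      φ'.FusesExactlyTwoFromDifferentSides := by
  induction φ with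
  | intro i => exact ⟨.intro i, .refl _, trivial, trivial⟩
  | union φ₁ φ₂ ih₁ ih₂ =>
    obtain ⟨φ₁', l₁, h₁⟩ := ih₁ hwf.1
    obtain ⟨φ₂', l₂, h₂⟩ := ih₂ hwf.2
    exact ⟨.union φ₁' φ₂', LGraph.union_congr l₁ l₂, FuseExpr.IsClean.union h₁ h₂⟩
  | join a b φ ih =>
    obtain ⟨φ', l, h⟩ := ih hwf.2
    obtain ⟨χ, lχ, hχ⟩ := FuseExpr.IsClean.exists_join h hwf.1
    exact ⟨χ, lχ.trans (LGraph.join_congr l), hχ⟩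
  | relabel a b φ ih =>
    obtain ⟨φ', l, h⟩ := ih hwf.2
    obtain ⟨χ, lχ, hχ⟩ := FuseExpr.IsClean.exists_relabel h a b
    exact ⟨χ, lχ.trans (LGraph.relabel_congr l), hχ⟩
  | fuse i φ ih =>
    obtain ⟨φ', l, h⟩ := ih hwf.1
    obtain ⟨χ, ⟨π, hπ⟩, hχ, -⟩ :=
      FuseExpr.IsClean.hasCleanMerges h (· = i) i rfl (l.symm.exists_lab_eq hwf.2)
    obtain ⟨e, he⟩ := l.symm
    exact ⟨χ, (hπ.comp_iso e he).liso (LGraph.isMerge_fuseMap hwf.2), hχ⟩
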